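/- arXiv:1707.09267 — 2 statements merged into one kernel-verified Lean document; each statement's English description precedes it below -/
import Mathlib

section
/- Through any five points in the projective plane, no four of which are collinear, there passes a conic; if no three of the five points are collinear, this conic is unique and nondegenerate. -/
open Projectivization

/-- The real projective plane. -/
abbrev P2 := Projectivization ℝ (Fin 3 → ℝ)

/-- Three points of `ℙ²(ℝ)` are collinear iff their representatives are linearly dependent. -/
def Collin3 (p q r : P2) : Prop :=
  ¬ LinearIndependent ℝ ![p.rep, q.rep, r.rep]

/-- A point lies on the conic defined by a quadratic form `Q`. -/
def OnConic (Q : QuadraticForm ℝ (Fin 3 → ℝ)) (p : P2) : Prop := Q p.rep = 0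

/-! A quadratic form on `K³` has six coefficients, so five linear conditions always leave a
nonzero one. If three of the points are independent, take them as a basis: a form vanishing on it
is `x X₀X₁ + y X₀X₂ + z X₁X₂`, with `x, y, z` the polar values on pairs of basis vectors. Vanishing
at the remaining two points is a pair of linear conditions on `(x, y, z)`, whose normals are the
pairwise products of the coordinates of those points; so `(x, y, z)` is a multiple of the cross
product `W` of the normals. Each component of `W` is a product of three determinants of triples of
the five points, nonzero when no three are collinear. Hence the conic is unique up to scale, and
its polar Gram matrix `[[0, x, y], [x, 0, z], [y, z, 0]]` has determinant `2xyz ≠ 0`. -/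

open Module Matrix QuadraticMap

section Existence

variable {K : Type*} [Field K]

noncomputable def quadraticMonomials : Fin 6 → QuadraticForm K (Fin 3 → K) :=
  ![linMulLin (.proj 0) (.proj 0), linMulLin (.proj 1) (.proj 1), linMulLin (.proj 2) (.proj 2),
    linMulLin (.proj 0) (.proj 1), linMulLin (.proj 0) (.proj 2), linMulLin (.proj 1) (.proj 2)]

lemma linearIndependent_quadraticMonomials : LinearIndependent K (quadraticMonomials (K := K)) := by
  refine Fintype.linearIndependent_iff.mpr fun g hg => ?_
  have h : ∀ u, ∑ j, g j * quadraticMonomials j u = 0 := fun u => by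
    simpa using congr($hg u)
  have h0 := h ![1, 0, 0]
  have h1 := h ![0, 1, 0]
  have h2 := h ![0, 0, 1]
  have h01 := h ![1, 1, 0]
  have h02 := h ![1, 0, 1]
  have h12 := h ![0, 1, 1]
  simp only [quadraticMonomials, Fin.sum_univ_six, cons_val_zero, cons_val_one, cons_val,
    linMulLin_apply, LinearMap.coe_proj, Function.eval, mul_one, mul_zero, add_zero,
    zero_add] at h0 h1 h2 h01 h02 h12
  simp only [h0, h1, h2, zero_add] at h01 h02 h12
  intro j
  fin_cases j <;> assumption

lemma exists_quadraticForm_ne_zero_forall_apply_eq_zero {n : ℕ} (hn : n < 6)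
    (v : Fin n → Fin 3 → K) : ∃ Q : QuadraticForm K (Fin 3 → K), Q ≠ 0 ∧ ∀ i, Q (v i) = 0 := by
  have hdep : ¬ LinearIndependent K fun j i => quadraticMonomials j (v i) := fun h => by
    have := h.fintype_card_le_finrank
    rw [Fintype.card_fin, finrank_fin_fun] at this
    omega
  obtain ⟨g, hg, j, hj⟩ := Fintype.not_linearIndependent_iff.mp hdep
  refine ⟨∑ j, g j • quadraticMonomials j, fun hQ => hj ?_, fun i => ?_⟩
  · have := Fintype.linearIndependent_iff.mp (linearIndependent_quadraticMonomials (K := K))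
    exact this g hQ j
  · simpa using congr_fun hg i

end Existence

section OffDiagPolar

variable {R M : Type*} [CommRing R] [AddCommGroup M] [Module R M]

def pairwiseProducts (c : Fin 3 → R) : Fin 3 → R := ![c 0 * c 1, c 0 * c 2, c 1 * c 2]

noncomputable def QuadraticMap.offDiagPolar (Q : QuadraticForm R M) (b : Basis (Fin 3) R M) :
    Fin 3 → R :=
  ![polar Q (b 0) (b 1), polar Q (b 0) (b 2), polar Q (b 1) (b 2)]

lemma QuadraticMap.apply_eq_pairwiseProducts_dotProduct {Q : QuadraticForm R M}
    {b : Basis (Fin 3) R M} (hQb : ∀ i, Q (b i) = 0) (u : M) :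
    Q u = pairwiseProducts (b.repr u) ⬝ᵥ Q.offDiagPolar b := by
  conv_lhs => rw [← b.sum_repr u]
  rw [Fin.sum_univ_three, QuadraticMap.map_add Q, QuadraticMap.map_add Q]
  simp only [QuadraticMap.map_smul, hQb, polar_smul_right, polar_smul_left, polar_add_left,
    smul_eq_mul, mul_zero, add_zero, zero_add, dotProduct, pairwiseProducts, offDiagPolar,
    Fin.sum_univ_three, cons_val_zero, cons_val_one, cons_val]
  ring

lemma QuadraticMap.eq_smul_of_offDiagPolar_eq_smul {Q Q' : QuadraticForm R M}
    {b : Basis (Fin 3) R M} (hQb : ∀ i, Q (b i) = 0) (hQ'b : ∀ i, Q' (b i) = 0) {c : R}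
    (h : Q'.offDiagPolar b = c • Q.offDiagPolar b) : Q' = c • Q := by
  ext u
  rw [_root_.smul_apply, apply_eq_pairwiseProducts_dotProduct hQb,
    apply_eq_pairwiseProducts_dotProduct hQ'b, h, dotProduct_smul, smul_eq_mul]

lemma QuadraticMap.separatingLeft_polarBilin_of_offDiagPolar_ne_zero [IsDomain R]
    {Q : QuadraticForm R M} {b : Basis (Fin 3) R M} (hQb : ∀ i, Q (b i) = 0)
    (hQ : ∀ k, Q.offDiagPolar b k ≠ 0) (h2 : (2 : R) ≠ 0) : (polarBilin Q).SeparatingLeft := by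
  refine LinearMap.separatingLeft_of_det_ne_zero b ?_
  have hdet : (LinearMap.toMatrix₂ b b (polarBilin Q)).det =
      2 * (Q.offDiagPolar b 0 * Q.offDiagPolar b 1 * Q.offDiagPolar b 2) := by
    simp only [det_fin_three, LinearMap.toMatrix₂_apply, polarBilin_apply_apply, polar_self, hQb,
      nsmul_zero, polar_comm Q (b 1) (b 0), polar_comm Q (b 2) (b 0), polar_comm Q (b 2) (b 1),
      offDiagPolar, cons_val_zero, cons_val_one, cons_val]
    ring
  rw [hdet]
  exact mul_ne_zero h2 (mul_ne_zero (mul_ne_zero (hQ 0) (hQ 1)) (hQ 2))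

end OffDiagPolar

lemma exists_smul_cross_eq_of_dotProduct_eq_zero {F : Type*} [Field F] {a d x : Fin 3 → F}
    (had : a ⨯₃ d ≠ 0) (ha : a ⬝ᵥ x = 0) (hd : d ⬝ᵥ x = 0) : ∃ t : F, t • a ⨯₃ d = x := by
  have hcross : a ⨯₃ d ⨯₃ x = 0 := by
    rw [cross_cross_eq_smul_sub_smul, ha, hd, zero_smul, zero_smul, sub_zero]
  by_contra! h
  exact crossProduct_ne_zero_iff_linearIndependent.mpr ((LinearIndependent.pair_iff' had).mpr h)
    hcross

variable {K V : Type*} [Field K] [AddCommGroup V] [Module K V]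

lemma Module.Basis.det_ne_zero_of_linearIndependent {ι : Type*} [Fintype ι] [DecidableEq ι]
    (b : Basis ι K V) {w : ι → V} (hw : LinearIndependent K w) : b.det w ≠ 0 := by
  have : FiniteDimensional K V := b.finiteDimensional_of_finite
  refine ((b.is_basis_iff_det).mp ⟨hw, ?_⟩).ne_zero
  exact hw.span_eq_top_of_card_eq_finrank' (finrank_eq_card_basis b).symm

lemma cross_pairwiseProducts_repr (b : Basis (Fin 3) K V) (u w : V) :
    pairwiseProducts (b.repr u) ⨯₃ pairwiseProducts (b.repr w) =
      ![b.det ![b 0, b 1, u] * b.det ![b 0, b 1, w] * b.det ![u, w, b 2],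
        b.det ![b 0, u, b 2] * b.det ![b 0, w, b 2] * b.det ![u, w, b 1],
        b.det ![u, b 1, b 2] * b.det ![w, b 1, b 2] * b.det ![u, w, b 0]] := by
  ext k
  fin_cases k <;>
    simp only [Fin.zero_eta, Fin.mk_one, Fin.reduceFinMk, cross_apply, pairwiseProducts,
      cons_val_zero, cons_val_one, cons_val, Basis.det_apply, det_fin_three, Basis.toMatrix_apply,
      Basis.repr_self, Finsupp.single_eq_same, ne_eq, Fin.reduceEq, not_false_eq_true,
      Finsupp.single_eq_of_ne] <;>
    ring

lemma QuadraticMap.exists_smul_cross_eq_offDiagPolar {Q : QuadraticForm K V}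
    {b : Basis (Fin 3) K V} (hQb : ∀ i, Q (b i) = 0) {u w : V} (hu : Q u = 0) (hw : Q w = 0)
    (huw : pairwiseProducts (b.repr u) ⨯₃ pairwiseProducts (b.repr w) ≠ 0) :
    ∃ t : K, t • pairwiseProducts (b.repr u) ⨯₃ pairwiseProducts (b.repr w) = Q.offDiagPolar b := by
  rw [apply_eq_pairwiseProducts_dotProduct hQb] at hu hw
  exact exists_smul_cross_eq_of_dotProduct_eq_zero huw hu hw

section FivePoints

variable {v : Fin 5 → V} {b : Basis (Fin 3) K V}

lemma QuadraticMap.apply_basis_eq_zero {Q : QuadraticForm K V} (hb : ⇑b = ![v 0, v 1, v 2])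
    (hQv : ∀ i, Q (v i) = 0) (i : Fin 3) : Q (b i) = 0 := by
  rw [hb]
  fin_cases i <;> exact hQv _

lemma cross_pairwiseProducts_repr_apply_ne_zero (hb : ⇑b = ![v 0, v 1, v 2])
    (hv : ∀ i j k, i ≠ j → i ≠ k → j ≠ k → LinearIndependent K ![v i, v j, v k]) (k : Fin 3) :
    (pairwiseProducts (b.repr (v 3)) ⨯₃ pairwiseProducts (b.repr (v 4))) k ≠ 0 := by
  have hdet : ∀ i j k, i ≠ j → i ≠ k → j ≠ k → b.det ![v i, v j, v k] ≠ 0 :=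
    fun i j k hij hik hjk => b.det_ne_zero_of_linearIndependent (hv i j k hij hik hjk)
  rw [cross_pairwiseProducts_repr, hb]
  fin_cases k <;> simp only [Fin.zero_eta, Fin.mk_one, Fin.reduceFinMk, cons_val] <;>
    exact mul_ne_zero
      (mul_ne_zero (hdet _ _ _ (by decide) (by decide) (by decide))
        (hdet _ _ _ (by decide) (by decide) (by decide)))
      (hdet _ _ _ (by decide) (by decide) (by decide))

lemma QuadraticMap.exists_ne_zero_smul_cross_eq_offDiagPolar {Q : QuadraticForm K V}
    (hb : ⇑b = ![v 0, v 1, v 2])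
    (hv : ∀ i j k, i ≠ j → i ≠ k → j ≠ k → LinearIndependent K ![v i, v j, v k])
    (hQ : Q ≠ 0) (hQv : ∀ i, Q (v i) = 0) :
    ∃ t ≠ (0 : K), t • pairwiseProducts (b.repr (v 3)) ⨯₃ pairwiseProducts (b.repr (v 4)) =
      Q.offDiagPolar b := by
  have hQb := apply_basis_eq_zero hb hQv
  have hW : pairwiseProducts (b.repr (v 3)) ⨯₃ pairwiseProducts (b.repr (v 4)) ≠ 0 :=
    fun h => cross_pairwiseProducts_repr_apply_ne_zero hb hv 0 (by rw [h, Pi.zero_apply])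
  obtain ⟨t, ht⟩ := exists_smul_cross_eq_offDiagPolar hQb (hQv 3) (hQv 4) hW
  refine ⟨t, fun ht0 => hQ ?_, ht⟩
  rw [← zero_smul K Q]
  exact eq_smul_of_offDiagPolar_eq_smul hQb hQb (by rw [← ht, ht0, zero_smul, zero_smul])

lemma QuadraticMap.separatingLeft_polarBilin_of_generalPosition {Q : QuadraticForm K V}
    (hb : ⇑b = ![v 0, v 1, v 2])
    (hv : ∀ i j k, i ≠ j → i ≠ k → j ≠ k → LinearIndependent K ![v i, v j, v k])
    (hQ : Q ≠ 0) (hQv : ∀ i, Q (v i) = 0) (h2 : (2 : K) ≠ 0) : (polarBilin Q).SeparatingLeft := by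
  obtain ⟨t, ht0, ht⟩ := exists_ne_zero_smul_cross_eq_offDiagPolar hb hv hQ hQv
  have hQb := apply_basis_eq_zero hb hQv
  refine separatingLeft_polarBilin_of_offDiagPolar_ne_zero hQb (fun k => ?_) h2
  rw [← ht, Pi.smul_apply, smul_eq_mul]
  exact mul_ne_zero ht0 (cross_pairwiseProducts_repr_apply_ne_zero hb hv k)

lemma QuadraticMap.exists_ne_zero_eq_smul_of_generalPosition {Q Q' : QuadraticForm K V}
    (hb : ⇑b = ![v 0, v 1, v 2])
    (hv : ∀ i j k, i ≠ j → i ≠ k → j ≠ k → LinearIndependent K ![v i, v j, v k])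
    (hQ : Q ≠ 0) (hQv : ∀ i, Q (v i) = 0) (hQ' : Q' ≠ 0) (hQ'v : ∀ i, Q' (v i) = 0) :
    ∃ c ≠ (0 : K), Q' = c • Q := by
  obtain ⟨t, ht0, ht⟩ := exists_ne_zero_smul_cross_eq_offDiagPolar hb hv hQ hQv
  obtain ⟨t', ht'0, ht'⟩ := exists_ne_zero_smul_cross_eq_offDiagPolar hb hv hQ' hQ'v
  have hQb := apply_basis_eq_zero hb hQv
  have hQ'b := apply_basis_eq_zero hb hQ'v
  refine ⟨t' / t, div_ne_zero ht'0 ht0, eq_smul_of_offDiagPolar_eq_smul hQb hQ'b ?_⟩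
  rw [← ht, ← ht', smul_smul, div_mul_cancel₀ _ ht0]

end FivePoints

theorem stmt5_general (p : Fin 5 → P2) :
    (∃ Q : QuadraticForm ℝ (Fin 3 → ℝ), Q ≠ 0 ∧ ∀ i, OnConic Q (p i)) ∧
    ((∀ i j k : Fin 5, i ≠ j → i ≠ k → j ≠ k → ¬ Collin3 (p i) (p j) (p k)) →
      ∃ Q : QuadraticForm ℝ (Fin 3 → ℝ), Q ≠ 0 ∧ (∀ i, OnConic Q (p i)) ∧
        (∀ v : Fin 3 → ℝ, (∀ w, QuadraticMap.polar Q v w = 0) → v = 0) ∧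
        ∀ Q' : QuadraticForm ℝ (Fin 3 → ℝ), Q' ≠ 0 → (∀ i, OnConic Q' (p i)) →
          ∃ c : ℝ, c ≠ 0 ∧ Q' = c • Q) := by
  let v : Fin 5 → Fin 3 → ℝ := fun i => (p i).rep
  obtain ⟨Q, hQ, hQv⟩ := exists_quadraticForm_ne_zero_forall_apply_eq_zero (by norm_num) v
  refine ⟨⟨Q, hQ, hQv⟩, fun hp => ?_⟩
  have hv : ∀ i j k, i ≠ j → i ≠ k → j ≠ k → LinearIndependent ℝ ![v i, v j, v k] :=
    fun i j k hij hik hjk => not_not.mp (hp i j k hij hik hjk)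
  let b := basisOfLinearIndependentOfCardEqFinrank (hv 0 1 2 (by decide) (by decide) (by decide))
    (by simp)
  have hb : ⇑b = ![v 0, v 1, v 2] := coe_basisOfLinearIndependentOfCardEqFinrank _ _
  exact ⟨Q, hQ, hQv, separatingLeft_polarBilin_of_generalPosition hb hv hQ hQv two_ne_zero,
    fun Q' hQ' hQ'v => exists_ne_zero_eq_smul_of_generalPosition hb hv hQ hQv hQ' hQ'v⟩

theorem stmt5 (p : Fin 5 → P2) (hinj : Function.Injective p)
    (h4 : ∀ i j k l : Fin 5, i ≠ j → i ≠ k → i ≠ l → j ≠ k → j ≠ l → k ≠ l →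
      ¬ (Collin3 (p i) (p j) (p k) ∧ Collin3 (p i) (p j) (p l) ∧
         Collin3 (p i) (p k) (p l) ∧ Collin3 (p j) (p k) (p l))) :
    (∃ Q : QuadraticForm ℝ (Fin 3 → ℝ), Q ≠ 0 ∧ ∀ i, OnConic Q (p i)) ∧
    ((∀ i j k : Fin 5, i ≠ j → i ≠ k → j ≠ k → ¬ Collin3 (p i) (p j) (p k)) →
      ∃ Q : QuadraticForm ℝ (Fin 3 → ℝ), Q ≠ 0 ∧ (∀ i, OnConic Q (p i)) ∧
        (∀ v : Fin 3 → ℝ, (∀ w, QuadraticMap.polar Q v w = 0) → v = 0) ∧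
        ∀ Q' : QuadraticForm ℝ (Fin 3 → ℝ), Q' ≠ 0 → (∀ i, OnConic Q' (p i)) →
          ∃ c : ℝ, c ≠ 0 ∧ Q' = c • Q) :=
  stmt5_general p
end

section
/- Kasner's theorem for regular pentagons: for a regular pentagon P centered at the origin, the pentagon D(P) formed by the intersection points of the diagonals and the pentagon I(P) formed by the tangency points of the inscribed circle satisfy I(D(P)) = D(I(P)); both are regular pentagons and both operations act on regular pentagons as a rotation composed with a dilation, hence commute. -/
open Real

/-- Vertex `j` of the regular `n`-gon of circumradius `r` and phase `φ`. -/
noncomputable def vert (n : ℕ) (r φ : ℝ) (j : ℤ) : ℝ × ℝ :=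
  (r * cos (2 * π * j / n + φ), r * sin (2 * π * j / n + φ))

/-- The line through two points of the plane. -/
def lineThrough (p q : ℝ × ℝ) : Set (ℝ × ℝ) := {x | ∃ t : ℝ, x = p + t • (q - p)}

/-- `w` is the polygon of consecutive intersection points of `k`-diagonals of `v`. -/
def IsDiagPoly (k : ℕ) (v w : ℤ → ℝ × ℝ) : Prop :=
  ∀ j : ℤ, w j ∈ lineThrough (v j) (v (j + k)) ∩ lineThrough (v (j + 1)) (v (j + k + 1))

/-- The polygon of midpoints of consecutive sides (tangency points with the
inscribed circle, for a regular polygon centered at the origin). -/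
noncomputable def midPoly (v : ℤ → ℝ × ℝ) : ℤ → ℝ × ℝ :=
  fun j => (1 / 2 : ℝ) • (v j + v (j + 1))

/-!
Both operations commute with rotations about the origin, so each maps the regular pentagon
`vert 5 r φ` to the regular pentagon `vert 5 (c * r) (φ + θ)` for constants `c`, `θ`
independent of `r` and `φ`; two maps of this form commute.

For the midpoints this is `cos (x - h) + cos (x + h) = 2 cos h cos x`. For the diagonals of a
regular `n`-gon, the chords from angle `a` to `a + 2b` and from `a + 2h` to `a + 2h + 2b`
(with `h = π / n`, `b = k π / n`) are exchanged by the reflection in the ray of angle `a + b + h`,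
so they meet on that ray, at distance `r cos b / cos h` from the centre: the distance of the
chord is `r cos b`, and the ray makes the angle `h` with its normal.
-/

def cross (u w : ℝ × ℝ) : ℝ := u.1 * w.2 - u.2 * w.1

lemma eq_of_mem_lineThrough_inter {p q p' q' x y : ℝ × ℝ} (hne : cross (q - p) (q' - p') ≠ 0)
    (hx : x ∈ lineThrough p q ∩ lineThrough p' q')
    (hy : y ∈ lineThrough p q ∩ lineThrough p' q') : x = y := by
  obtain ⟨⟨t, rfl⟩, s, hs⟩ := hx
  obtain ⟨⟨t', rfl⟩, s', hs'⟩ := hy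
  obtain ⟨hs₁, hs₂⟩ := Prod.ext_iff.mp hs
  obtain ⟨hs'₁, hs'₂⟩ := Prod.ext_iff.mp hs'
  simp only [Prod.fst_add, Prod.snd_add, Prod.fst_sub, Prod.snd_sub, Prod.smul_fst,
    Prod.smul_snd, smul_eq_mul] at hs₁ hs₂ hs'₁ hs'₂
  have htt' : (t - t') * cross (q - p) (q' - p') = 0 := by
    simp only [cross, Prod.fst_sub, Prod.snd_sub]
    linear_combination (q'.2 - p'.2) * (hs₁ - hs'₁) - (q'.1 - p'.1) * (hs₂ - hs'₂)
  rw [sub_eq_zero.mp ((mul_eq_zero.mp htt').resolve_right hne)]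

lemma cross_polarCoord_symm_chords (r a b h : ℝ) :
    cross (polarCoord.symm (r, a + 2 * b) - polarCoord.symm (r, a))
      (polarCoord.symm (r, a + 2 * h + 2 * b) - polarCoord.symm (r, a + 2 * h)) =
      4 * r ^ 2 * sin b ^ 2 * sin (2 * h) := by
  have ha := sin_sq_add_cos_sq a
  have hb := sin_sq_add_cos_sq b
  simp only [cross, polarCoord_symm_apply, Prod.fst_sub, Prod.snd_sub, cos_add, sin_add,
    cos_two_mul, sin_two_mul]
  grind

lemma polarCoord_symm_mem_lineThrough (r a b h : ℝ) (hh : cos h ≠ 0) (hb : sin b ≠ 0) :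
    polarCoord.symm (cos b / cos h * r, a + b + h) ∈
      lineThrough (polarCoord.symm (r, a)) (polarCoord.symm (r, a + 2 * b)) := by
  refine ⟨sin (b + h) / (2 * sin b * cos h), ?_⟩
  have hb2 := sin_sq_add_cos_sq b
  simp only [polarCoord_symm_apply, Prod.smul_mk, Prod.mk_add_mk, Prod.mk_sub_mk, smul_eq_mul,
    Prod.mk.injEq, cos_add, sin_add, cos_two_mul, sin_two_mul]
  constructor <;> field_simp <;> grind

lemma vert_eq_polarCoord_symm {n : ℕ} {r φ θ : ℝ} {j : ℤ} (hθ : 2 * π * j / n + φ = θ) :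
    vert n r φ j = polarCoord.symm (r, θ) := by
  rw [vert, polarCoord_symm_apply, hθ]

theorem midPoly_vert (n : ℕ) (r φ : ℝ) :
    midPoly (vert n r φ) = vert n (cos (π / n) * r) (φ + π / n) := by
  funext j
  set x := 2 * π * j / n + φ + π / n
  rw [midPoly, vert_eq_polarCoord_symm (θ := x - π / n) (by ring),
    vert_eq_polarCoord_symm (θ := x + π / n) (by push_cast; ring),
    vert_eq_polarCoord_symm (θ := x) (by ring)]
  simp only [polarCoord_symm_apply, cos_add, cos_sub, sin_add, sin_sub, Prod.mk_add_mk,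
    Prod.smul_mk, smul_eq_mul, Prod.mk.injEq]
  constructor <;> ring

lemma mem_chords_inter_iff {r a b h : ℝ} (hr : r ≠ 0) (hh : cos h ≠ 0) (hb : sin b ≠ 0)
    (h2h : sin (2 * h) ≠ 0) {x : ℝ × ℝ} :
    x ∈ lineThrough (polarCoord.symm (r, a)) (polarCoord.symm (r, a + 2 * b)) ∩
        lineThrough (polarCoord.symm (r, a + 2 * h)) (polarCoord.symm (r, a + 2 * h + 2 * b)) ↔
      x = polarCoord.symm (cos b / cos h * r, a + b + h) := by
  have hmem : polarCoord.symm (cos b / cos h * r, a + b + h) ∈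
      lineThrough (polarCoord.symm (r, a)) (polarCoord.symm (r, a + 2 * b)) ∩
        lineThrough (polarCoord.symm (r, a + 2 * h)) (polarCoord.symm (r, a + 2 * h + 2 * b)) := by
    refine ⟨polarCoord_symm_mem_lineThrough r a b h hh hb, ?_⟩
    have := polarCoord_symm_mem_lineThrough r (a + 2 * h) b (-h) (by rwa [cos_neg]) hb
    rwa [cos_neg, show a + 2 * h + b + -h = a + b + h by ring] at this
  have hcross : cross (polarCoord.symm (r, a + 2 * b) - polarCoord.symm (r, a))
      (polarCoord.symm (r, a + 2 * h + 2 * b) - polarCoord.symm (r, a + 2 * h)) ≠ 0 := by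
    rw [cross_polarCoord_symm_chords]
    positivity
  exact ⟨fun hx => eq_of_mem_lineThrough_inter hcross hx hmem, fun hx => hx ▸ hmem⟩

theorem isDiagPoly_vert_iff {n k : ℕ} (hn : 3 ≤ n) (hk : 0 < k) (hkn : k < n) {r : ℝ}
    (hr : r ≠ 0) (φ : ℝ) {d : ℤ → ℝ × ℝ} :
    IsDiagPoly k (vert n r φ) d ↔
      d = vert n (cos (k * π / n) / cos (π / n) * r) (φ + (k + 1) * π / n) := by
  have hn₀ : (0 : ℝ) < n := by positivity
  have hn₃ : (3 : ℝ) ≤ n := by exact_mod_cast hn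
  have hkn' : (k : ℝ) < n := by exact_mod_cast hkn
  have hk' : (0 : ℝ) < k := by exact_mod_cast hk
  have hh : cos (π / n) ≠ 0 := by
    refine (cos_pos_of_mem_Ioo ⟨by linarith [pi_pos, div_pos pi_pos hn₀], ?_⟩).ne'
    rw [div_lt_iff₀ hn₀]; nlinarith [pi_pos]
  have hb : sin (k * π / n) ≠ 0 := by
    refine (sin_pos_of_pos_of_lt_pi (by positivity) ?_).ne'
    rw [div_lt_iff₀ hn₀]; nlinarith [pi_pos]
  have h2h : sin (2 * (π / n)) ≠ 0 := by
    refine (sin_pos_of_pos_of_lt_pi (by positivity) ?_).ne'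
    rw [← mul_div_assoc, div_lt_iff₀ hn₀]; nlinarith [pi_pos]
  rw [IsDiagPoly, funext_iff]
  refine forall_congr' fun j => ?_
  set a := 2 * π * j / n + φ
  rw [vert_eq_polarCoord_symm (j := j) (θ := a) rfl,
    vert_eq_polarCoord_symm (j := j + k) (θ := a + 2 * (k * π / n)) (by push_cast; ring),
    vert_eq_polarCoord_symm (j := j + 1) (θ := a + 2 * (π / n)) (by push_cast; ring),
    vert_eq_polarCoord_symm (j := j + k + 1) (θ := a + 2 * (π / n) + 2 * (k * π / n))
      (by push_cast; ring),
    vert_eq_polarCoord_symm (j := j) (θ := a + k * π / n + π / n) (by ring)]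
  exact mem_chords_inter_iff hr hh hb h2h

lemma isDiagPoly_two_vert_five {r φ : ℝ} (hr : r ≠ 0) {d : ℤ → ℝ × ℝ}
    (hd : IsDiagPoly 2 (vert 5 r φ) d) :
    d = vert 5 (cos (2 * π / 5) / cos (π / 5) * r) (φ + 3 * π / 5) := by
  have := (isDiagPoly_vert_iff (by norm_num) (by norm_num) (by norm_num) hr φ).mp hd
  rwa [Nat.cast_ofNat, Nat.cast_ofNat, show (2 : ℝ) + 1 = 3 by norm_num] at this

theorem stmt14 (r φ : ℝ) (hr : 0 < r) :
    -- I(D(P)) = D(I(P))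
    (∀ d di : ℤ → ℝ × ℝ, IsDiagPoly 2 (vert 5 r φ) d →
      IsDiagPoly 2 (midPoly (vert 5 r φ)) di → midPoly d = di) ∧
    -- D(P) is regular
    (∀ d : ℤ → ℝ × ℝ, IsDiagPoly 2 (vert 5 r φ) d →
      ∃ r' φ' : ℝ, 0 < r' ∧ d = vert 5 r' φ') ∧
    -- I(P) is regular
    (∃ r' φ' : ℝ, 0 < r' ∧ midPoly (vert 5 r φ) = vert 5 r' φ') ∧
    -- D acts on regular pentagons as a rotation composed with a dilation
    (∃ cD θD : ℝ, 0 < cD ∧ ∀ r' φ' : ℝ, 0 < r' → ∀ d : ℤ → ℝ × ℝ,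
      IsDiagPoly 2 (vert 5 r' φ') d → d = vert 5 (cD * r') (φ' + θD)) ∧
    -- I acts on regular pentagons as a rotation composed with a dilation
    (∃ cI θI : ℝ, 0 < cI ∧ ∀ r' φ' : ℝ,
      midPoly (vert 5 r' φ') = vert 5 (cI * r') (φ' + θI)) := by
  have hcI : 0 < cos (π / 5) := cos_pos_of_mem_Ioo ⟨by linarith [pi_pos], by linarith [pi_pos]⟩
  have hcD : 0 < cos (2 * π / 5) / cos (π / 5) :=
    div_pos (cos_pos_of_mem_Ioo ⟨by linarith [pi_pos], by linarith [pi_pos]⟩) hcI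
  have hmid := midPoly_vert 5
  push_cast at hmid
  have hdiag {r' φ' : ℝ} (hr' : 0 < r') {d : ℤ → ℝ × ℝ}
      (hd : IsDiagPoly 2 (vert 5 r' φ') d) :=
    isDiagPoly_two_vert_five hr'.ne' hd
  refine ⟨fun d di hd hdi => ?_, fun d hd => ⟨_, _, mul_pos hcD hr, hdiag hr hd⟩,
    ⟨_, _, mul_pos hcI hr, hmid r φ⟩, ⟨_, _, hcD, fun r' φ' hr' d hd => hdiag hr' hd⟩,
    ⟨_, _, hcI, hmid⟩⟩
  rw [hmid] at hdi
  rw [hdiag hr hd, hmid, hdiag (mul_pos hcI hr) hdi]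
  congr 1 <;> ring
end
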